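/- A k-peg Hanoi group G is contracting if and only if its prenucleus is finite; in that case the prenucleus equals the nucleus of G. -/

import Mathlib

/-!
Common framework: automorphisms of the rooted tree `X_k^*`, root permutations,
sections, self-similar and contracting groups, Hanoi automorphisms and Hanoi
groups, following Makisumi–Stadnyk–Steinhurst, "Modified Hanoi Towers Groups
and Limit Spaces".

A word `x_n … x_1` over the alphabet `X_k = Fin k` is encoded as the list
`[x_n, …, x_1]`, whose head `x_n` is the first letter, i.e. the letter that a
tree automorphism reads (and permutes) first.
-/

namespace Hanoi

/-- Words over the alphabet `X_k = Fin k`. -/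
abbrev Word (k : ℕ) := List (Fin k)

/-- `e` is an automorphism of the rooted tree `X_k^*`: it fixes the root
(the empty word), preserves word length (levels) and preserves the tree
structure (words sharing an initial segment of length `n` are sent to words
sharing an initial segment of length `n`). -/
def IsTreeAut {k : ℕ} (e : Equiv.Perm (Word k)) : Prop :=
  (∀ w : Word k, (e w).length = w.length) ∧
    ∀ (w v : Word k) (n : ℕ), w.take n = v.take n → (e w).take n = (e v).take n

open Classical in
/-- The root permutation `σ_e` of a tree automorphism `e` (its action on
one-letter words). -/
noncomputable def rootPerm {k : ℕ} (e : Equiv.Perm (Word k)) : Equiv.Perm (Fin k) :=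
  if h : Function.Bijective (fun x : Fin k => ((e [x]).head?.getD x)) then
    Equiv.ofBijective _ h
  else 1

open Classical in
/-- The section `e|_x` of `e` at a letter `x`: the unique automorphism with
`e (x :: w) = σ_e x :: (e|_x) w` for all words `w`. -/
noncomputable def sec {k : ℕ} (e : Equiv.Perm (Word k)) (x : Fin k) : Equiv.Perm (Word k) :=
  if h : Function.Bijective (fun w : Word k => (e (x :: w)).tail) then
    Equiv.ofBijective _ h
  else 1

/-- The section `e|_v` of `e` at a word `v = x_n … x_1`, defined by
`e|_v = (e|_{x_n})|_{x_{n-1} … x_1}`. -/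
noncomputable def secW {k : ℕ} (e : Equiv.Perm (Word k)) : Word k → Equiv.Perm (Word k)
  | [] => e
  | x :: v => secW (sec e x) v

/-- A subgroup of the permutations of `X_k^*` is self-similar if it consists of
tree automorphisms and is closed under taking sections. -/
def IsSelfSimilar {k : ℕ} (G : Subgroup (Equiv.Perm (Word k))) : Prop :=
  (∀ g ∈ G, IsTreeAut g) ∧ ∀ g ∈ G, ∀ x : Fin k, sec g x ∈ G

/-- A self-similar group `G` is contracting if there is a finite subset `N ⊆ G`
such that for every `g ∈ G` all sections of `g` at words of length at least
some `m` lie in `N`. -/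
def IsContracting {k : ℕ} (G : Subgroup (Equiv.Perm (Word k))) : Prop :=
  ∃ N : Set (Equiv.Perm (Word k)), N.Finite ∧ N ⊆ (G : Set (Equiv.Perm (Word k))) ∧
    ∀ g ∈ G, ∃ m : ℕ, ∀ v : Word k, m ≤ v.length → secW g v ∈ N

/-- `N` is the nucleus of `G`: a smallest finite subset of `G` catching all
deep enough sections of every element of `G`. -/
def IsNucleus {k : ℕ} (G : Subgroup (Equiv.Perm (Word k)))
    (N : Set (Equiv.Perm (Word k))) : Prop :=
  (N.Finite ∧ N ⊆ (G : Set (Equiv.Perm (Word k))) ∧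
    ∀ g ∈ G, ∃ m : ℕ, ∀ v : Word k, m ≤ v.length → secW g v ∈ N) ∧
  ∀ N' : Set (Equiv.Perm (Word k)), N'.Finite → N' ⊆ (G : Set (Equiv.Perm (Word k))) →
    (∀ g ∈ G, ∃ m : ℕ, ∀ v : Word k, m ≤ v.length → secW g v ∈ N') → N ⊆ N'

/-- `a` is a Hanoi automorphism with set of inactive pegs `Q`: the section at
each active peg (element of the complement of `Q`) is trivial, the section at
each inactive peg is `a` itself, and the root permutation fixes each inactive
peg. -/
def IsHanoiWith {k : ℕ} (a : Equiv.Perm (Word k)) (Q : Set (Fin k)) : Prop :=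
  IsTreeAut a ∧ (∀ i ∉ Q, sec a i = 1) ∧ (∀ j ∈ Q, sec a j = a) ∧
    ∀ j ∈ Q, rootPerm a j = j

/-- `a` is a `k`-peg Hanoi automorphism. -/
def IsHanoiAut {k : ℕ} (a : Equiv.Perm (Word k)) : Prop := ∃ Q, IsHanoiWith a Q

open Classical in
/-- The set `Q_a` of inactive pegs of a Hanoi automorphism `a`; by convention
`Q_1 = X_k` (for `a ≠ 1` the set of inactive pegs is uniquely determined). -/
noncomputable def inactivePegs {k : ℕ} (a : Equiv.Perm (Word k)) : Set (Fin k) :=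
  if a = 1 then Set.univ
  else if h : ∃ Q, IsHanoiWith a Q then h.choose else ∅

/-- `S_{k,q}`: the set of Hanoi automorphisms over `X_k` with exactly `q`
inactive pegs. -/
noncomputable def hanoiSet (k q : ℕ) : Set (Equiv.Perm (Word k)) :=
  {a | IsHanoiAut a ∧ (inactivePegs a).ncard = q}

/-- `L = [s_n, …, s_1]` is a representation of `g` over the generating set `S`:
each `s_i ∈ S ∪ S⁻¹` and `g = s_n ⋯ s_2 s_1`. -/
def IsRepOf {k : ℕ} (S : Set (Equiv.Perm (Word k))) (L : List (Equiv.Perm (Word k)))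
    (g : Equiv.Perm (Word k)) : Prop :=
  (∀ s ∈ L, s ∈ S ∨ s⁻¹ ∈ S) ∧ L.prod = g

/-- The length `l(g)` of `g` with respect to `S`: the length of a minimal
representation (`0` for the identity). -/
noncomputable def repLength {k : ℕ} (S : Set (Equiv.Perm (Word k)))
    (g : Equiv.Perm (Word k)) : ℕ :=
  sInf {n | ∃ L, IsRepOf S L g ∧ L.length = n}

/-- The essential set of a representation: the intersection of the sets of
inactive pegs of its letters. -/
noncomputable def essSet {k : ℕ} (L : List (Equiv.Perm (Word k))) : Set (Fin k) :=
  ⋂ s ∈ L, inactivePegs s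

/-- The prenucleus of `G`: the set of elements `g ∈ G` with `g|_j = g` for some
letter `j`. -/
noncomputable def preNucleus {k : ℕ} (G : Subgroup (Equiv.Perm (Word k))) :
    Set (Equiv.Perm (Word k)) :=
  {g | g ∈ G ∧ ∃ j : Fin k, sec g j = g}

/-- The underlying function of the Hanoi Towers move `a_{ij}`: it changes the
first occurrence of `i` or `j` in a word by means of the transposition `(i j)`
and leaves the rest of the word unchanged. -/
def hanoiMoveFun {k : ℕ} (i j : Fin k) : Word k → Word k
  | [] => []
  | x :: w => if x = i ∨ x = j then Equiv.swap i j x :: w else x :: hanoiMoveFun i j w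

theorem hanoiMoveFun_involutive {k : ℕ} (i j : Fin k) :
    Function.Involutive (hanoiMoveFun i j) := by
  intro w
  induction w with
  | nil => rfl
  | cons x t ih =>
    by_cases h : x = i ∨ x = j
    · have h2 : Equiv.swap i j x = i ∨ Equiv.swap i j x = j := by
        rcases h with h | h <;> subst h <;> simp
      simp only [hanoiMoveFun, if_pos h, if_pos h2, Equiv.swap_apply_self]
    · simp only [hanoiMoveFun, if_neg h, ih]

/-- The Hanoi Towers move `a_{ij}`, as a permutation of `X_k^*`: its root
permutation is the transposition `(i j)`, its sections at `i` and `j` are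
trivial and all its other sections equal `a_{ij}` itself. -/
def hanoiMove {k : ℕ} (i j : Fin k) : Equiv.Perm (Word k) :=
  (hanoiMoveFun_involutive i j).toPerm

/-- The orbit of the letter `j` under the subgroup of `Sym(X_k)` generated by
the root permutations of the elements of `T`. -/
noncomputable def orbT {k : ℕ} (T : Finset (Equiv.Perm (Word k))) (j : Fin k) : Set (Fin k) :=
  MulAction.orbit (Subgroup.closure ((fun a => rootPerm a) '' (T : Set (Equiv.Perm (Word k))))) j

/-- The set `Fix(T)` of letters fixed by the root permutation of every element
of `T`. -/
noncomputable def fixT {k : ℕ} (T : Finset (Equiv.Perm (Word k))) : Set (Fin k) :=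
  {x | ∀ s ∈ T, rootPerm s x = x}

/-- Condition (*) on a generating set `S` of Hanoi automorphisms: for every
finite `T ⊆ S` with nonempty essential set and every letter `j ∉ Fix(T)`,
the orbit of `j` misses the inactive pegs of some element of `T`. -/
noncomputable def CondStar {k : ℕ} (S : Set (Equiv.Perm (Word k))) : Prop :=
  ∀ T : Finset (Equiv.Perm (Word k)), (T : Set (Equiv.Perm (Word k))) ⊆ S →
    (⋂ s ∈ T, inactivePegs s).Nonempty →
    ∀ j : Fin k, j ∉ fixT T →
      ∃ s ∈ T, orbT T j ∩ inactivePegs s = ∅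

open Classical in
/-- `d(g)`: the least number of distinct generators occurring among all
representations of `g` having nonempty essential set. -/
noncomputable def dCount {k : ℕ} (S : Set (Equiv.Perm (Word k)))
    (g : Equiv.Perm (Word k)) : ℕ :=
  sInf {M | ∃ L, IsRepOf S L g ∧ (essSet L).Nonempty ∧ L.toFinset.card = M}

/-- `S` is fully symmetric: for every non-identity `a ∈ S` and every
`φ ∈ Sym(X_k)`, the Hanoi automorphism `φ·a` with inactive pegs `φ(Q_a)` and
root permutation `φ ∘ σ_a ∘ φ⁻¹` again lies in `S`. -/
noncomputable def FullySymmetric {k : ℕ} (S : Set (Equiv.Perm (Word k))) : Prop :=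
  ∀ a ∈ S, a ≠ 1 → ∀ φ : Equiv.Perm (Fin k), ∀ b : Equiv.Perm (Word k),
    IsHanoiWith b (φ '' inactivePegs a) →
    rootPerm b = φ * rootPerm a * φ⁻¹ → b ∈ S

/-- The family `R̲_{k,n}`: the identity together with all Hanoi automorphisms
`a` such that (1) `Q_a ⊆ {m+1, …, m+n}` for some `m`, and (2) whenever
`i ∈ Q_a` the root permutation of `a` fixes `i-1, …, i-(n-1)`
(all peg labels mod `k`). -/
noncomputable def Runder (k n : ℕ) : Set (Equiv.Perm (Word k)) :=
  {a | a = 1 ∨ (IsHanoiAut a ∧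
    (∃ m : Fin k, ∀ q ∈ inactivePegs a, ∃ t : ℕ, 1 ≤ t ∧ t ≤ n ∧
      (q : ℕ) = ((m : ℕ) + t) % k) ∧
    ∀ i ∈ inactivePegs a, ∀ x : Fin k, ∀ t : ℕ, 1 ≤ t → t ≤ n - 1 →
      ((x : ℕ) + t) % k = (i : ℕ) → rootPerm a x = x)}

/-- The family `R̄_{k,n}`: the identity together with all Hanoi automorphisms
`a` such that (1) `Q_a ⊆ {m+1, …, m+n}` for some `m`, and (2) whenever
`i ∈ Q_a` the root permutation of `a` fixes `i+1, …, i+(n-1)`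
(all peg labels mod `k`). -/
noncomputable def Rover (k n : ℕ) : Set (Equiv.Perm (Word k)) :=
  {a | a = 1 ∨ (IsHanoiAut a ∧
    (∃ m : Fin k, ∀ q ∈ inactivePegs a, ∃ t : ℕ, 1 ≤ t ∧ t ≤ n ∧
      (q : ℕ) = ((m : ℕ) + t) % k) ∧
    ∀ i ∈ inactivePegs a, ∀ x : Fin k, ∀ t : ℕ, 1 ≤ t → t ≤ n - 1 →
      (x : ℕ) = ((i : ℕ) + t) % k → rootPerm a x = x)}

/-- The finite word `x_m … x_1` (first letter `x_m`) read off from a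
left-infinite sequence `… x_2 x_1`, encoded as `x : ℕ → Fin k` with
`x s = x_{s+1}`. -/
def wordOf {k : ℕ} (x : ℕ → Fin k) (m : ℕ) : Word k := (List.range m).reverse.map x

/-!
Write `g ∈ G` as a product `a_1 ⋯ a_n` of Hanoi automorphisms. The section of `g` at a letter is
the product of those factors whose inactive pegs contain the letter they read, all other factors
having trivial sections there; so it is the product of a sublist, and the sublist is proper unless
the letter is an inactive peg of every factor. Hence after `n` letters every section of `g` is a
product of Hanoi automorphisms with a common inactive peg `j`, and such a product `h` satisfies
`h|_j = h`: deep sections lie in the prenucleus. Conversely, `h|_j = h` gives `h|_{j^m} = h` for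
every `m`, so the prenucleus lies in every set that contains all deep enough sections.
-/

section TreeAut

variable {k : ℕ} {e g h : Equiv.Perm (Word k)}

theorem IsTreeAut.take_apply (he : IsTreeAut e) (n : ℕ) (w : Word k) :
    (e w).take n = e (w.take n) := by
  rcases le_or_gt w.length n with hwn | -
  · rw [List.take_of_length_le (by rw [he.1]; exact hwn), List.take_of_length_le hwn]
  · rw [he.2 w (w.take n) n (by rw [List.take_take, min_self]),
      List.take_of_length_le (by rw [he.1, List.length_take]; exact min_le_left _ _)]

theorem isTreeAut_one : IsTreeAut (1 : Equiv.Perm (Word k)) :=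
  ⟨fun _ => rfl, fun _ _ _ hwv => hwv⟩

theorem IsTreeAut.mul (hg : IsTreeAut g) (hh : IsTreeAut h) : IsTreeAut (g * h) :=
  ⟨fun w => by simp only [Equiv.Perm.mul_apply, hg.1, hh.1],
    fun w v n hwv => hg.2 _ _ n (hh.2 _ _ n hwv)⟩

theorem IsTreeAut.inv (he : IsTreeAut e) : IsTreeAut e⁻¹ := by
  have take_inv_apply (n : ℕ) (w : Word k) : (e⁻¹ w).take n = e⁻¹ (w.take n) := by
    apply e.injective
    rw [← he.take_apply, Equiv.Perm.coe_inv, Equiv.apply_symm_apply, Equiv.apply_symm_apply]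
  refine ⟨fun w => ?_, fun w v n hwv => by rw [take_inv_apply, take_inv_apply, hwv]⟩
  rw [← he.1, Equiv.Perm.coe_inv, Equiv.apply_symm_apply]

theorem IsTreeAut.apply_singleton (he : IsTreeAut e) (x : Fin k) : e [x] = [rootPerm e x] := by
  have singleton_eq (y : Fin k) : e [y] = [(e [y]).head?.getD y] := by
    obtain ⟨c, hc⟩ := List.length_eq_one_iff.mp (he.1 [y])
    simp [hc]
  have hinj : Function.Injective (fun y : Fin k => (e [y]).head?.getD y) := fun a b hab => by
    have : e [a] = e [b] := by
      rw [singleton_eq a, singleton_eq b]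
      exact congrArg ([·]) hab
    simpa using e.injective this
  rw [rootPerm, dif_pos (Finite.injective_iff_bijective.mp hinj), Equiv.ofBijective_apply]
  exact singleton_eq x

theorem rootPerm_mul (hg : IsTreeAut g) (hh : IsTreeAut h) (x : Fin k) :
    rootPerm (g * h) x = rootPerm g (rootPerm h x) := by
  have := (hg.mul hh).apply_singleton x
  rw [Equiv.Perm.mul_apply, hh.apply_singleton, hg.apply_singleton] at this
  exact (List.singleton_inj.mp this).symm

theorem rootPerm_one : rootPerm (1 : Equiv.Perm (Word k)) = 1 :=
  Equiv.ext fun x => (List.singleton_inj.mp (isTreeAut_one.apply_singleton x)).symm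

theorem rootPerm_inv (he : IsTreeAut e) : rootPerm e⁻¹ = (rootPerm e)⁻¹ :=
  eq_inv_of_mul_eq_one_right <| Equiv.ext fun x => by
    rw [Equiv.Perm.mul_apply, ← rootPerm_mul he he.inv, mul_inv_cancel, rootPerm_one]

theorem IsTreeAut.apply_cons_eq_cons_tail (he : IsTreeAut e) (x : Fin k) (w : Word k) :
    e (x :: w) = rootPerm e x :: (e (x :: w)).tail := by
  have hhead : (e (x :: w)).take 1 = [rootPerm e x] := by
    rw [he.take_apply]
    exact he.apply_singleton x
  cases hew : e (x :: w) with
  | nil => simp [hew] at hhead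
  | cons c t => simpa [hew] using hhead

theorem IsTreeAut.apply_cons (he : IsTreeAut e) (x : Fin k) (w : Word k) :
    e (x :: w) = rootPerm e x :: sec e x w := by
  have hbij : Function.Bijective (fun w : Word k => (e (x :: w)).tail) := by
    refine ⟨fun u u' huu' => ?_, fun u => ⟨(e⁻¹ (rootPerm e x :: u)).tail, ?_⟩⟩
    · have := congrArg (rootPerm e x :: ·) huu'
      simpa [← he.apply_cons_eq_cons_tail] using this
    · have hpre : e⁻¹ (rootPerm e x :: u) = x :: (e⁻¹ (rootPerm e x :: u)).tail := by
        rw [he.inv.apply_cons_eq_cons_tail, rootPerm_inv he, Equiv.Perm.coe_inv,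
          Equiv.symm_apply_apply]
        rfl
      show (e (x :: _)).tail = u
      rw [← hpre, Equiv.Perm.coe_inv, Equiv.apply_symm_apply, List.tail_cons]
  rw [sec, dif_pos hbij, Equiv.ofBijective_apply]
  exact he.apply_cons_eq_cons_tail x w

theorem sec_eq_of_forall_apply_cons (he : IsTreeAut e) {x y : Fin k} {f : Equiv.Perm (Word k)}
    (hf : ∀ w, e (x :: w) = y :: f w) : sec e x = f :=
  Equiv.ext fun w => ((List.cons_eq_cons.mp ((he.apply_cons x w).symm.trans (hf w))).2)

theorem sec_one (x : Fin k) : sec (1 : Equiv.Perm (Word k)) x = 1 :=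
  sec_eq_of_forall_apply_cons isTreeAut_one fun _ => rfl

theorem sec_mul (hg : IsTreeAut g) (hh : IsTreeAut h) (x : Fin k) :
    sec (g * h) x = sec g (rootPerm h x) * sec h x :=
  sec_eq_of_forall_apply_cons (hg.mul hh) fun w => by
    rw [Equiv.Perm.mul_apply, hh.apply_cons, hg.apply_cons, Equiv.Perm.mul_apply]

theorem sec_inv (he : IsTreeAut e) (x : Fin k) :
    sec e⁻¹ x = (sec e (rootPerm e⁻¹ x))⁻¹ := by
  have := sec_mul he he.inv x
  rw [mul_inv_cancel, sec_one] at this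
  exact eq_inv_of_mul_eq_one_right this.symm

theorem secW_replicate_of_sec_eq_self {j : Fin k} (hj : sec e j = e) (m : ℕ) :
    secW e (List.replicate m j) = e := by
  induction m with
  | zero => rfl
  | succ m ih => rwa [List.replicate_succ, secW, hj]

end TreeAut

theorem IsHanoiWith.inv {k : ℕ} {a : Equiv.Perm (Word k)} {Q : Set (Fin k)}
    (ha : IsHanoiWith a Q) : IsHanoiWith a⁻¹ Q := by
  obtain ⟨hta, hactive, hinactive, hfix⟩ := ha
  have hfix_inv (j : Fin k) (hj : j ∈ Q) : rootPerm a⁻¹ j = j := by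
    rw [rootPerm_inv hta, Equiv.Perm.inv_eq_iff_eq, hfix j hj]
  refine ⟨hta.inv, fun i hi => ?_, fun j hj => ?_, hfix_inv⟩
  · have hQ : rootPerm a⁻¹ i ∉ Q := fun hmem => by
      have hself : rootPerm a⁻¹ i = i := by
        simpa [rootPerm_inv hta] using (hfix _ hmem).symm
      exact hi (hself ▸ hmem)
    rw [sec_inv hta, hactive _ hQ, inv_one]
  · rw [sec_inv hta, hfix_inv j hj, hinactive j hj]

section HanoiProducts

variable {k : ℕ}

/-- A Hanoi automorphism paired with a set of inactive pegs witnessing it. The pegs are carried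
along because `inactivePegs` is a choice not known to be compatible with inversion. -/
abbrev HanoiFactor (k : ℕ) := Equiv.Perm (Word k) × Set (Fin k)

def prodFactors (L : List (HanoiFactor k)) : Equiv.Perm (Word k) := (L.map Prod.fst).prod

def IsHanoiFactors (L : List (HanoiFactor k)) : Prop := ∀ p ∈ L, IsHanoiWith p.1 p.2

def commonPegs (L : List (HanoiFactor k)) : Set (Fin k) := {j | ∀ p ∈ L, j ∈ p.2}

open Classical in
/-- The factors contributing to the section of `prodFactors L` at `x`: the product acts from the
right, so the factor `p` in `p :: L` reads the letter `σ_{prodFactors L} x`. -/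
noncomputable def sectionFactors : List (HanoiFactor k) → Fin k → List (HanoiFactor k)
  | [], _ => []
  | p :: L, x => if rootPerm (prodFactors L) x ∈ p.2 then p :: sectionFactors L x
      else sectionFactors L x

@[simp] theorem prodFactors_nil : prodFactors ([] : List (HanoiFactor k)) = 1 := rfl

@[simp] theorem prodFactors_cons (p : HanoiFactor k) (L : List (HanoiFactor k)) :
    prodFactors (p :: L) = p.1 * prodFactors L := by
  simp [prodFactors]

@[simp] theorem prodFactors_append (L L' : List (HanoiFactor k)) :
    prodFactors (L ++ L') = prodFactors L * prodFactors L' := by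
  simp [prodFactors]

theorem commonPegs_anti {L L' : List (HanoiFactor k)} (h : L'.Sublist L) :
    commonPegs L ⊆ commonPegs L' := fun _ hj p hp => hj p (h.mem hp)

theorem sectionFactors_sublist (L : List (HanoiFactor k)) (x : Fin k) :
    (sectionFactors L x).Sublist L := by
  induction L with
  | nil => exact List.Sublist.slnil
  | cons p L ih =>
    rw [sectionFactors]
    split_ifs
    · exact ih.cons_cons p
    · exact ih.cons p

theorem IsHanoiFactors.sublist {L L' : List (HanoiFactor k)} (hL : IsHanoiFactors L)
    (h : L'.Sublist L) : IsHanoiFactors L' := fun p hp => hL p (h.mem hp)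

variable {L : List (HanoiFactor k)}

theorem isTreeAut_prodFactors (hL : IsHanoiFactors L) : IsTreeAut (prodFactors L) := by
  induction L with
  | nil => exact isTreeAut_one
  | cons p L ih =>
    rw [prodFactors_cons]
    exact (hL p List.mem_cons_self).1.mul (ih (hL.sublist (List.sublist_cons_self p L)))

theorem sec_prodFactors (hL : IsHanoiFactors L) (x : Fin k) :
    sec (prodFactors L) x = prodFactors (sectionFactors L x) := by
  induction L with
  | nil => exact sec_one x
  | cons p L ih =>
    have hL' := hL.sublist (List.sublist_cons_self p L)
    obtain ⟨hp, hactive, hinactive, -⟩ := hL p List.mem_cons_self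
    rw [prodFactors_cons, sec_mul hp (isTreeAut_prodFactors hL'), sectionFactors, ih hL']
    split_ifs with hx
    · rw [prodFactors_cons, hinactive _ hx]
    · rw [hactive _ hx, one_mul]

theorem rootPerm_prodFactors_of_mem_commonPegs (hL : IsHanoiFactors L) {j : Fin k}
    (hj : j ∈ commonPegs L) :
    rootPerm (prodFactors L) j = j := by
  induction L with
  | nil => rw [prodFactors_nil, rootPerm_one, Equiv.Perm.one_apply]
  | cons p L ih =>
    have hL' := hL.sublist (List.sublist_cons_self p L)
    have hp := hL p List.mem_cons_self
    rw [prodFactors_cons, rootPerm_mul hp.1 (isTreeAut_prodFactors hL'),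
      ih hL' (commonPegs_anti (List.sublist_cons_self p L) hj)]
    exact hp.2.2.2 j (hj p List.mem_cons_self)

theorem sectionFactors_eq_self_iff (hL : IsHanoiFactors L) {x : Fin k} :
    sectionFactors L x = L ↔ x ∈ commonPegs L := by
  induction L with
  | nil => simp [sectionFactors, commonPegs]
  | cons p L ih =>
    have hL' := hL.sublist (List.sublist_cons_self p L)
    by_cases hx : rootPerm (prodFactors L) x ∈ p.2
    · rw [sectionFactors, if_pos hx, List.cons_inj_right, ih hL']
      refine ⟨fun hxL q hq => ?_, fun hxL => commonPegs_anti (List.sublist_cons_self p L) hxL⟩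
      rcases List.mem_cons.mp hq with rfl | hq
      · rwa [rootPerm_prodFactors_of_mem_commonPegs hL' hxL] at hx
      · exact hxL q hq
    · refine iff_of_false (fun heq => ?_) (fun hxL => hx ?_)
      · have := (sectionFactors_sublist L x).length_le
        rw [sectionFactors, if_neg hx] at heq
        rw [heq, List.length_cons] at this
        omega
      · rw [rootPerm_prodFactors_of_mem_commonPegs hL'
          (commonPegs_anti (List.sublist_cons_self p L) hxL)]
        exact hxL p List.mem_cons_self

theorem sec_prodFactors_of_mem_commonPegs (hL : IsHanoiFactors L) {j : Fin k}
    (hj : j ∈ commonPegs L) :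
    sec (prodFactors L) j = prodFactors L := by
  rw [sec_prodFactors hL, (sectionFactors_eq_self_iff hL).mpr hj]

/-- Each letter outside `commonPegs L` drops a factor, so after `L.length` letters the surviving
factors have a common inactive peg. -/
theorem exists_sublist_secW_prodFactors (hL : IsHanoiFactors L) (v : Word k)
    (hdeep : L.length < v.length ∨ (commonPegs L).Nonempty) :
    ∃ L' : List (HanoiFactor k), L'.Sublist L ∧ (commonPegs L').Nonempty ∧
      secW (prodFactors L) v = prodFactors L' := by
  induction v generalizing L with
  | nil =>
    rcases hdeep with hlt | hne
    · exact absurd hlt (Nat.not_lt_zero _)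
    · exact ⟨L, List.Sublist.refl L, hne, rfl⟩
  | cons x v ih =>
    have hsub := sectionFactors_sublist L x
    have hdeep' : (sectionFactors L x).length < v.length ∨
        (commonPegs (sectionFactors L x)).Nonempty := by
      by_cases hx : x ∈ commonPegs L
      · exact Or.inr ⟨x, commonPegs_anti hsub hx⟩
      · have hshort : (sectionFactors L x).length < L.length :=
          lt_of_le_of_ne hsub.length_le (mt hsub.eq_of_length
            (mt (sectionFactors_eq_self_iff hL).mp hx))
        refine hdeep.imp (fun hlt => ?_) (fun ⟨j, hj⟩ => ⟨j, commonPegs_anti hsub hj⟩)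
        rw [List.length_cons] at hlt
        omega
    obtain ⟨L', hL'sub, hne, hsec⟩ := ih (hL.sublist hsub) hdeep'
    exact ⟨L', hL'sub.trans hsub, hne, by rw [secW, sec_prodFactors hL, hsec]⟩

end HanoiProducts

theorem exists_hanoiFactors_of_mem_closure {k : ℕ} {S : Set (Equiv.Perm (Word k))}
    (hS : ∀ a ∈ S, IsHanoiAut a) {g : Equiv.Perm (Word k)} (hg : g ∈ Subgroup.closure S) :
    ∃ L : List (HanoiFactor k), IsHanoiFactors L ∧ (∀ p ∈ L, p.1 ∈ Subgroup.closure S) ∧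
      prodFactors L = g := by
  induction hg using Subgroup.closure_induction'' with
  | one => exact ⟨[], by simp [IsHanoiFactors], by simp, rfl⟩
  | mem a ha =>
    obtain ⟨Q, hQ⟩ := hS a ha
    exact ⟨[(a, Q)], by simpa [IsHanoiFactors] using hQ,
      by simpa using Subgroup.subset_closure ha, by simp⟩
  | inv_mem a ha =>
    obtain ⟨Q, hQ⟩ := hS a ha
    exact ⟨[(a⁻¹, Q)], by simpa [IsHanoiFactors] using hQ.inv,
      by simpa using Subgroup.subset_closure ha, by simp⟩
  | mul g h _ _ ihg ihh =>
    obtain ⟨L, hL, hLmem, rfl⟩ := ihg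
    obtain ⟨L', hL', hL'mem, rfl⟩ := ihh
    exact ⟨L ++ L', List.forall_mem_append.mpr ⟨hL, hL'⟩,
      List.forall_mem_append.mpr ⟨hLmem, hL'mem⟩, prodFactors_append L L'⟩

theorem exists_forall_secW_mem_preNucleus {k : ℕ} {S : Set (Equiv.Perm (Word k))}
    (hS : ∀ a ∈ S, IsHanoiAut a) {g : Equiv.Perm (Word k)} (hg : g ∈ Subgroup.closure S) :
    ∃ m : ℕ, ∀ v : Word k, m ≤ v.length →
      secW g v ∈ preNucleus (Subgroup.closure S) := by
  obtain ⟨L, hL, hLmem, rfl⟩ := exists_hanoiFactors_of_mem_closure hS hg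
  refine ⟨L.length + 1, fun v hv => ?_⟩
  obtain ⟨L', hsub, ⟨j, hj⟩, hsec⟩ :=
    exists_sublist_secW_prodFactors hL v (Or.inl (by omega))
  rw [hsec]
  refine ⟨?_, j, sec_prodFactors_of_mem_commonPegs (hL.sublist hsub) hj⟩
  refine Subgroup.list_prod_mem _ fun a ha => ?_
  obtain ⟨p, hp, rfl⟩ := List.mem_map.mp ha
  exact hLmem p (hsub.mem hp)

theorem preNucleus_subset {k : ℕ} {G : Subgroup (Equiv.Perm (Word k))}
    {N : Set (Equiv.Perm (Word k))}
    (hN : ∀ g ∈ G, ∃ m : ℕ, ∀ v : Word k, m ≤ v.length → secW g v ∈ N) :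
    preNucleus G ⊆ N := by
  rintro g ⟨hg, j, hj⟩
  obtain ⟨m, hm⟩ := hN g hg
  simpa [secW_replicate_of_sec_eq_self hj] using hm (List.replicate m j) (by simp)

theorem contracting_iff_prenucleus_finite_general {k : ℕ} (S : Set (Equiv.Perm (Word k)))
    (hS : ∀ a ∈ S, IsHanoiAut a) :
    (IsContracting (Subgroup.closure S) ↔ (preNucleus (Subgroup.closure S)).Finite) ∧
    (IsContracting (Subgroup.closure S) →
      IsNucleus (Subgroup.closure S) (preNucleus (Subgroup.closure S))) := by
  have hsub : preNucleus (Subgroup.closure S) ⊆ Subgroup.closure S := fun _ hg => hg.1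
  have hdeep := fun g (hg : g ∈ Subgroup.closure S) => exists_forall_secW_mem_preNucleus hS hg
  have hfinite : IsContracting (Subgroup.closure S) → (preNucleus (Subgroup.closure S)).Finite :=
    fun ⟨N, hNfin, _, hN⟩ => hNfin.subset (preNucleus_subset hN)
  exact ⟨⟨hfinite, fun hfin => ⟨_, hfin, hsub, hdeep⟩⟩,
    fun hc => ⟨⟨hfinite hc, hsub, hdeep⟩, fun _ _ _ hN => preNucleus_subset hN⟩⟩

/-- Theorem: contraction and the prenucleus.
A `k`-peg Hanoi group `G` is contracting if and only if its prenucleus is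
finite; in that case the prenucleus is the nucleus of `G`. -/
theorem contracting_iff_prenucleus_finite {k : ℕ} (S : Set (Equiv.Perm (Word k)))
    (hS1 : (1 : Equiv.Perm (Word k)) ∈ S) (hS : ∀ a ∈ S, IsHanoiAut a) :
    (IsContracting (Subgroup.closure S) ↔ (preNucleus (Subgroup.closure S)).Finite) ∧
    (IsContracting (Subgroup.closure S) →
      IsNucleus (Subgroup.closure S) (preNucleus (Subgroup.closure S))) :=
  contracting_iff_prenucleus_finite_general S hS

end Hanoi
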